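/- Population version of the score difference: let X be multivariate Gaussian with distribution F, H a DAG with X_i ∈ Nd_H(X_k) \ Pa_H(X_k), and H' obtained from H by adding X_i → X_k. Then S*_λ(H', F) − S*_λ(H, F) = (1/2) log(1 − ρ²_{ik|Pa_H(k)}) + λ, where ρ_{ik|Pa_H(k)} is the population partial correlation between X_i and X_k given Pa_H(X_k). -/

import Mathlib

open Finset

/-- The principal submatrix of `V` indexed by the finite set `S`. -/
noncomputable def subCov {p : ℕ} (V : Matrix (Fin p) (Fin p) ℝ) (S : Finset (Fin p)) :
    Matrix S S ℝ := Matrix.of fun a b => V a.1 b.1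

/-- The conditional covariance of coordinates `i` and `j` given the coordinates in `S`
(Schur complement formula). -/
noncomputable def condCov {p : ℕ} (V : Matrix (Fin p) (Fin p) ℝ) (S : Finset (Fin p))
    (i j : Fin p) : ℝ :=
  V i j - ∑ a : S, ∑ b : S, V i a.1 * (subCov V S)⁻¹ a b * V b.1 j

/-- The partial correlation between coordinates `i` and `j` given the coordinates in `S`. -/
noncomputable def parcor {p : ℕ} (V : Matrix (Fin p) (Fin p) ℝ) (S : Finset (Fin p))
    (i j : Fin p) : ℝ :=
  condCov V S i j / Real.sqrt (condCov V S i i * condCov V S j j)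

/-- A directed acyclic graph on `Fin p` with decidable (Boolean) edges. -/
structure FinDAG (p : ℕ) where
  E : Fin p → Fin p → Bool
  acyclic : ∀ i, ¬ Relation.TransGen (fun a b => E a b = true) i i

namespace FinDAG

variable {p : ℕ}

/-- The parents of `k`. -/
def pa (H : FinDAG p) (k : Fin p) : Finset (Fin p) := univ.filter fun i => H.E i k

/-- The number of edges of `H`. -/
def edgeCount (H : FinDAG p) : ℕ := (univ.filter fun q : Fin p × Fin p => H.E q.1 q.2).card

/-- `j` is a descendant of `i` (each node is a descendant of itself). -/
def desc (H : FinDAG p) (i j : Fin p) : Prop :=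
  Relation.ReflTransGen (fun a b => H.E a b = true) i j

end FinDAG

/-- The maximized expected Gaussian conditional log-likelihood of node `k` given parent set `P`,
under a mean-zero Gaussian distribution with covariance matrix `V`: the supremum over regression
coefficients `β` and error variance `σ² > 0` of the expected log conditional density
`E[log L(β, σ²; X_k | X_P)] = −(1/2)log(2πσ²) − E[(X_k − β·X_P)²]/(2σ²)`. -/
noncomputable def oracleNodeMaxLL {p : ℕ} (V : Matrix (Fin p) (Fin p) ℝ) (k : Fin p)
    (P : Finset (Fin p)) : ℝ :=
  sSup { v : ℝ | ∃ (β : Fin p → ℝ) (σ2 : ℝ), 0 < σ2 ∧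
    v = -(1 / 2) * Real.log (2 * Real.pi * σ2) -
      (V k k - 2 * ∑ j ∈ P, β j * V j k + ∑ j ∈ P, ∑ l ∈ P, β j * β l * V j l) / (2 * σ2) }

/-- The ℓ₀-penalized oracle (expected log-likelihood) score of a DAG `H` with respect to a
mean-zero multivariate Gaussian distribution with covariance matrix `V`. -/
noncomputable def oracleScore {p : ℕ} (lam : ℝ) (V : Matrix (Fin p) (Fin p) ℝ)
    (H : FinDAG p) : ℝ :=
  (- ∑ k, oracleNodeMaxLL V k (H.pa k)) + lam * H.edgeCount

namespace OracleAux
open Matrix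
variable {p : ℕ}

/-- extend a vector on `S` by zero -/
noncomputable def ext0 (S : Finset (Fin p)) (x : S → ℝ) : Fin p → ℝ :=
  fun j => if h : j ∈ S then x ⟨j, h⟩ else 0

lemma sum_ext0_mul (S : Finset (Fin p)) (x : S → ℝ) (g : Fin p → ℝ) :
    ∑ j, ext0 S x j * g j = ∑ a : S, x a * g a.1 := by
  rw [show (∑ a : S, x a * g a.1) = ∑ a : S, (fun j => ext0 S x j * g j) a.1 from
    Finset.sum_congr rfl (fun a _ => by simp [ext0])]
  rw [Finset.sum_coe_sort S (fun j => ext0 S x j * g j)]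
  exact (Finset.sum_subset (Finset.subset_univ S) (fun j _ hj => by simp [ext0, hj])).symm

lemma sum_mul_ext0 (S : Finset (Fin p)) (x : S → ℝ) (g : Fin p → ℝ) :
    ∑ j, g j * ext0 S x j = ∑ a : S, g a.1 * x a := by
  calc ∑ j, g j * ext0 S x j = ∑ j, ext0 S x j * g j := by simp_rw [mul_comm]
    _ = ∑ a : S, x a * g a.1 := sum_ext0_mul S x g
    _ = ∑ a : S, g a.1 * x a := by simp_rw [mul_comm]

lemma ext0_quadform (V : Matrix (Fin p) (Fin p) ℝ) (S : Finset (Fin p)) (x : S → ℝ) :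
    ext0 S x ⬝ᵥ V *ᵥ ext0 S x = x ⬝ᵥ (subCov V S) *ᵥ x := by
  simp only [dotProduct, mulVec, subCov, Matrix.of_apply]
  rw [sum_ext0_mul S x]
  exact Finset.sum_congr rfl fun a _ => by rw [sum_mul_ext0]

lemma subCov_posDef {V : Matrix (Fin p) (Fin p) ℝ} (hV : V.PosDef) (S : Finset (Fin p)) :
    (subCov V S).PosDef := by
  refine PosDef.of_dotProduct_mulVec_pos ?_ ?_
  · ext a b
    simpa [subCov, Matrix.conjTranspose_apply] using hV.isHermitian.apply a.1 b.1
  · intro x hx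
    have hy : ext0 S x ≠ 0 := by
      obtain ⟨a, ha⟩ := Function.ne_iff.mp hx
      intro h
      apply ha
      have := congrFun h a.1
      simpa [ext0] using this
    have h2 := hV.dotProduct_mulVec_pos hy
    simpa [ext0_quadform] using h2

lemma symm_vecMul {n : Type*} [Fintype n] {A : Matrix n n ℝ} (hA : Aᵀ = A) (x : n → ℝ) :
    x ᵥ* A = A *ᵥ x := by
  nth_rewrite 2 [← hA]
  rw [Matrix.mulVec_transpose]

lemma completing_square {n : Type*} [Fintype n] [DecidableEq n] {A : Matrix n n ℝ}
    (hA : A.PosDef) (c b : n → ℝ) :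
    b ⬝ᵥ A *ᵥ b - 2 * (b ⬝ᵥ c) + c ⬝ᵥ A⁻¹ *ᵥ c
      = (b - A⁻¹ *ᵥ c) ⬝ᵥ A *ᵥ (b - A⁻¹ *ᵥ c) := by
  have hdet : IsUnit A.det := isUnit_iff_ne_zero.mpr hA.det_pos.ne'
  have hAs : Aᵀ = A := by
    have := hA.isHermitian
    simpa [Matrix.IsHermitian] using this
  have h1 : A *ᵥ (A⁻¹ *ᵥ c) = c := by
    rw [Matrix.mulVec_mulVec, Matrix.mul_nonsing_inv _ hdet, Matrix.one_mulVec]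
  have h2 : ∀ v : n → ℝ, (A⁻¹ *ᵥ c) ⬝ᵥ A *ᵥ v = c ⬝ᵥ v := by
    intro v
    rw [Matrix.dotProduct_mulVec, symm_vecMul hAs, h1]
  rw [Matrix.mulVec_sub, dotProduct_sub, sub_dotProduct, sub_dotProduct]
  rw [h1, h2 b]
  have h4 : (A⁻¹ *ᵥ c) ⬝ᵥ c = c ⬝ᵥ A⁻¹ *ᵥ c := dotProduct_comm _ _
  have h5 : c ⬝ᵥ b = b ⬝ᵥ c := dotProduct_comm _ _
  linarith [h4, h5]

/-- The expected residual sum of squares for regressing on target `w` with coefficients `β`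
restricted to `S`. -/
noncomputable def Qf (V : Matrix (Fin p) (Fin p) ℝ) (S : Finset (Fin p)) (w β : Fin p → ℝ) : ℝ :=
  w ⬝ᵥ V *ᵥ w - 2 * ∑ j ∈ S, β j * (V *ᵥ w) j + ∑ j ∈ S, ∑ l ∈ S, β j * β l * V j l

/-- The minimal value of `Qf` over `β`. -/
noncomputable def Rm (V : Matrix (Fin p) (Fin p) ℝ) (S : Finset (Fin p)) (w : Fin p → ℝ) : ℝ :=
  w ⬝ᵥ V *ᵥ w - ∑ a : S, ∑ b : S, (V *ᵥ w) a.1 * (subCov V S)⁻¹ a b * (V *ᵥ w) b.1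

variable (V : Matrix (Fin p) (Fin p) ℝ) (S : Finset (Fin p)) (w β : Fin p → ℝ)

lemma sum1 (g : Fin p → ℝ) :
    ∑ j ∈ S, β j * g j = (fun a : S => β a.1) ⬝ᵥ (fun a : S => g a.1) := by
  rw [dotProduct]
  exact (Finset.sum_coe_sort S (fun j => β j * g j)).symm

lemma sum2 : ∑ j ∈ S, ∑ l ∈ S, β j * β l * V j l
    = (fun a : S => β a.1) ⬝ᵥ (subCov V S) *ᵥ (fun a : S => β a.1) := by
  simp only [dotProduct, mulVec, subCov, Matrix.of_apply]
  rw [← Finset.sum_coe_sort S (fun j => ∑ l ∈ S, β j * β l * V j l)]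
  refine Finset.sum_congr rfl fun a _ => ?_
  rw [Finset.mul_sum, ← Finset.sum_coe_sort S (fun l => β a.1 * β l * V a.1 l)]
  exact Finset.sum_congr rfl fun b _ => by ring

lemma sum3 (c : Fin p → ℝ) : ∑ a : S, ∑ b : S, c a.1 * (subCov V S)⁻¹ a b * c b.1
    = (fun a : S => c a.1) ⬝ᵥ (subCov V S)⁻¹ *ᵥ (fun a : S => c a.1) := by
  simp only [dotProduct, mulVec]
  refine Finset.sum_congr rfl fun a _ => ?_
  rw [Finset.mul_sum]
  exact Finset.sum_congr rfl fun b _ => by ring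

lemma Qf_sub_Rm {V : Matrix (Fin p) (Fin p) ℝ} (hV : V.PosDef) :
    Qf V S w β = Rm V S w +
      (((fun a : S => β a.1) - (subCov V S)⁻¹ *ᵥ (fun a : S => (V *ᵥ w) a.1)) ⬝ᵥ
        (subCov V S) *ᵥ ((fun a : S => β a.1) - (subCov V S)⁻¹ *ᵥ (fun a : S => (V *ᵥ w) a.1))) := by
  have hcs := completing_square (subCov_posDef hV S)
    (fun a : S => (V *ᵥ w) a.1) (fun a : S => β a.1)
  unfold Qf Rm
  rw [sum1 S β, sum2 V S β, sum3 V S]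
  linarith [hcs]

lemma Rm_le_Qf {V : Matrix (Fin p) (Fin p) ℝ} (hV : V.PosDef) : Rm V S w ≤ Qf V S w β := by
  rw [Qf_sub_Rm S w β hV]
  have h := (subCov_posDef hV S).posSemidef.dotProduct_mulVec_nonneg
    ((fun a : S => β a.1) - (subCov V S)⁻¹ *ᵥ (fun a : S => (V *ᵥ w) a.1))
  simp only [star_trivial] at h
  linarith

/-- The optimal coefficient vector. -/
noncomputable def βopt (V : Matrix (Fin p) (Fin p) ℝ) (S : Finset (Fin p)) (w : Fin p → ℝ) :
    Fin p → ℝ := ext0 S ((subCov V S)⁻¹ *ᵥ (fun a : S => (V *ᵥ w) a.1))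

lemma Qf_attains {V : Matrix (Fin p) (Fin p) ℝ} (hV : V.PosDef) :
    Qf V S w (βopt V S w) = Rm V S w := by
  rw [Qf_sub_Rm S w _ hV]
  have hb : (fun a : S => βopt V S w a.1)
      = (subCov V S)⁻¹ *ᵥ (fun a : S => (V *ᵥ w) a.1) := by
    funext a; simp [βopt, ext0]
  rw [hb]
  simp

lemma Qf_quadform {V : Matrix (Fin p) (Fin p) ℝ} (hVs : Vᵀ = V) :
    Qf V S w β = (w - ext0 S (fun a : S => β a.1)) ⬝ᵥ V *ᵥ (w - ext0 S (fun a : S => β a.1)) := by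
  set u := ext0 S (fun a : S => β a.1) with hu
  have huw : u ⬝ᵥ V *ᵥ w = ∑ j ∈ S, β j * (V *ᵥ w) j := by
    rw [show u ⬝ᵥ V *ᵥ w = ∑ j, u j * (V *ᵥ w) j from rfl, sum_ext0_mul,
      ← Finset.sum_coe_sort S (fun j => β j * (V *ᵥ w) j)]
  have hwu : w ⬝ᵥ V *ᵥ u = u ⬝ᵥ V *ᵥ w := by
    rw [Matrix.dotProduct_mulVec, symm_vecMul hVs, dotProduct_comm]
  have huu : u ⬝ᵥ V *ᵥ u = ∑ j ∈ S, ∑ l ∈ S, β j * β l * V j l := by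
    rw [hu, ext0_quadform, ← sum2]
  rw [Matrix.mulVec_sub, dotProduct_sub, sub_dotProduct, sub_dotProduct]
  unfold Qf
  linarith

lemma Rm_pos {V : Matrix (Fin p) (Fin p) ℝ} (hV : V.PosDef) {j0 : Fin p} (hj0 : j0 ∉ S)
    (hw : w j0 ≠ 0) : 0 < Rm V S w := by
  have hVs : Vᵀ = V := by simpa [Matrix.IsHermitian] using hV.isHermitian
  rw [← Qf_attains S w hV, Qf_quadform S w _ hVs]
  set z := w - ext0 S (fun a : S => βopt V S w a.1) with hz0
  have hz : z ≠ 0 := by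
    intro h
    have := congrFun h j0
    simp [hz0, ext0, hj0, sub_eq_zero] at this
    exact hw this
  have := hV.dotProduct_mulVec_pos hz
  simpa using this

lemma mulVec_single' (k : Fin p) : V *ᵥ (Pi.single k 1 : Fin p → ℝ) = fun j => V j k := by
  funext j
  simp [Matrix.mulVec_single]

lemma Rm_single {V : Matrix (Fin p) (Fin p) ℝ} (hVs : Vᵀ = V) (k : Fin p) :
    Rm V S (Pi.single k 1) = condCov V S k k := by
  have hsym : ∀ x y, V x y = V y x := fun x y => by nth_rewrite 2 [← hVs]; rw [Matrix.transpose_apply]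
  unfold Rm condCov
  rw [mulVec_single' V k]
  congr 1
  · simp [single_dotProduct]
  · refine Finset.sum_congr rfl fun a _ => Finset.sum_congr rfl fun b _ => ?_
    show V a.1 k * _ * V b.1 k = V k a.1 * _ * V b.1 k
    rw [hsym a.1 k]

lemma mulVec_comb (γ : ℝ) (i k : Fin p) :
    V *ᵥ ((Pi.single k 1 : Fin p → ℝ) - γ • (Pi.single i 1 : Fin p → ℝ)) = fun j => V j k - γ * V j i := by
  funext j
  simp [Matrix.mulVec_sub, Matrix.mulVec_smul, Matrix.mulVec_single]

lemma Rm_quad {V : Matrix (Fin p) (Fin p) ℝ} (hV : V.PosDef) (γ : ℝ) (i k : Fin p) :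
    Rm V S ((Pi.single k 1 : Fin p → ℝ) - γ • (Pi.single i 1 : Fin p → ℝ))
      = condCov V S k k - 2 * γ * condCov V S i k + γ ^ 2 * condCov V S i i := by
  have hVs : Vᵀ = V := by simpa [Matrix.IsHermitian] using hV.isHermitian
  have hsym : ∀ x y, V x y = V y x := fun x y => by nth_rewrite 2 [← hVs]; rw [Matrix.transpose_apply]
  have hSs : (subCov V S)ᵀ = subCov V S := by
    have := (subCov_posDef hV S).isHermitian
    simpa [Matrix.IsHermitian] using this
  have hinv : ∀ v v' : S → ℝ, v ⬝ᵥ (subCov V S)⁻¹ *ᵥ v' = v' ⬝ᵥ (subCov V S)⁻¹ *ᵥ v := by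
    intro v v'
    have hS' : ((subCov V S)⁻¹)ᵀ = (subCov V S)⁻¹ := by
      rw [Matrix.transpose_nonsing_inv, hSs]
    rw [Matrix.dotProduct_mulVec, symm_vecMul hS', dotProduct_comm]
  set ck : S → ℝ := fun a => V a.1 k with hck
  set ci : S → ℝ := fun a => V a.1 i with hci
  have hvw : (fun a : S => (V *ᵥ ((Pi.single k 1 : Fin p → ℝ) - γ • (Pi.single i 1 : Fin p → ℝ))) a.1)
      = ck - γ • ci := by
    funext a
    rw [mulVec_comb V γ i k]
    simp [hck, hci]
  have hq : ∀ x y : Fin p, ∑ a : S, ∑ b : S, V x a.1 * (subCov V S)⁻¹ a b * V b.1 y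
      = (fun a : S => V a.1 x) ⬝ᵥ (subCov V S)⁻¹ *ᵥ (fun a : S => V a.1 y) := by
    intro x y
    simp only [dotProduct, mulVec]
    refine Finset.sum_congr rfl fun a _ => ?_
    rw [Finset.mul_sum, hsym x a.1]
    exact Finset.sum_congr rfl fun b _ => by ring
  unfold Rm
  rw [show ∑ a : S, ∑ b : S,
        (V *ᵥ ((Pi.single k 1 : Fin p → ℝ) - γ • (Pi.single i 1 : Fin p → ℝ))) a.1 * (subCov V S)⁻¹ a b *
          (V *ᵥ ((Pi.single k 1 : Fin p → ℝ) - γ • (Pi.single i 1 : Fin p → ℝ))) b.1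
      = (ck - γ • ci) ⬝ᵥ (subCov V S)⁻¹ *ᵥ (ck - γ • ci) from by
    rw [← hvw]; exact sum3 V S _]
  have hfirst : ((Pi.single k 1 : Fin p → ℝ) - γ • (Pi.single i 1 : Fin p → ℝ)) ⬝ᵥ
      V *ᵥ ((Pi.single k 1 : Fin p → ℝ) - γ • (Pi.single i 1 : Fin p → ℝ))
      = V k k - 2 * γ * V i k + γ ^ 2 * V i i := by
    rw [mulVec_comb V γ i k]
    simp only [sub_dotProduct, smul_dotProduct, single_dotProduct,
      smul_eq_mul]
    rw [hsym k i]
    ring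
  have hbil : (ck - γ • ci) ⬝ᵥ (subCov V S)⁻¹ *ᵥ (ck - γ • ci)
      = ck ⬝ᵥ (subCov V S)⁻¹ *ᵥ ck - 2 * γ * (ci ⬝ᵥ (subCov V S)⁻¹ *ᵥ ck)
        + γ ^ 2 * (ci ⬝ᵥ (subCov V S)⁻¹ *ᵥ ci) := by
    rw [Matrix.mulVec_sub, dotProduct_sub, sub_dotProduct, sub_dotProduct,
      Matrix.mulVec_smul, dotProduct_smul, smul_dotProduct, smul_dotProduct,
      dotProduct_smul]
    simp only [smul_eq_mul]
    rw [hinv ck ci]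
    ring
  unfold condCov
  rw [hfirst, hbil, hq i k, hq i i, hq k k]
  ring

lemma Qf_congr {β' : Fin p → ℝ} (h : ∀ j ∈ S, β j = β' j) : Qf V S w β = Qf V S w β' := by
  unfold Qf
  rw [Finset.sum_congr rfl (fun j hj => by rw [h j hj]),
    Finset.sum_congr rfl (fun j hj => Finset.sum_congr rfl fun l hl => by rw [h j hj, h l hl])]

lemma Qf_insert {V : Matrix (Fin p) (Fin p) ℝ} (hVs : Vᵀ = V) {i : Fin p} (hiS : i ∉ S)
    (k : Fin p) (β : Fin p → ℝ) :
    Qf V (insert i S) (Pi.single k 1) β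
      = Qf V S ((Pi.single k 1 : Fin p → ℝ) - β i • (Pi.single i 1 : Fin p → ℝ)) β := by
  have hsym : ∀ x y, V x y = V y x := fun x y => by nth_rewrite 2 [← hVs]; rw [Matrix.transpose_apply]
  unfold Qf
  rw [mulVec_single' V k, mulVec_comb V (β i) i k]
  simp only [Finset.sum_insert hiS]
  have e1 : ∑ j ∈ S, β j * (V j k - β i * V j i)
      = (∑ j ∈ S, β j * V j k) - β i * ∑ j ∈ S, β j * V j i := by
    rw [Finset.mul_sum, ← Finset.sum_sub_distrib]
    exact Finset.sum_congr rfl fun j _ => by ring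
  have e2 : ∑ l ∈ S, β i * β l * V i l = β i * ∑ j ∈ S, β j * V j i := by
    rw [Finset.mul_sum]
    exact Finset.sum_congr rfl fun j _ => by rw [hsym i j]; ring
  have e3 : ∑ j ∈ S, (β j * β i * V j i + ∑ l ∈ S, β j * β l * V j l)
      = β i * (∑ j ∈ S, β j * V j i) + ∑ j ∈ S, ∑ l ∈ S, β j * β l * V j l := by
    rw [Finset.sum_add_distrib, Finset.mul_sum]
    congr 1
    exact Finset.sum_congr rfl fun j _ => by ring
  have e4 : ((Pi.single k 1 : Fin p → ℝ) - β i • (Pi.single i 1 : Fin p → ℝ)) ⬝ᵥ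
      (fun j => V j k - β i * V j i)
      = (V k k - β i * V k i) - β i * (V i k - β i * V i i) := by
    simp [sub_dotProduct, smul_dotProduct, single_dotProduct]
  have e5 : (Pi.single k 1 : Fin p → ℝ) ⬝ᵥ (fun j => V j k) = V k k := by
    simp [single_dotProduct]
  rw [e1, e2, e3, e4, e5]
  have : (fun j => V j k) i = V i k := rfl
  rw [show β i * (fun j => V j k) i = β i * V i k from rfl, hsym k i]
  ring

lemma condCov_insert {V : Matrix (Fin p) (Fin p) ℝ} (hV : V.PosDef) {i k : Fin p}
    (hiS : i ∉ S) (hkS : k ∉ S) :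
    condCov V (insert i S) k k
      = condCov V S k k - (condCov V S i k) ^ 2 / condCov V S i i := by
  have hVs : Vᵀ = V := by simpa [Matrix.IsHermitian] using hV.isHermitian
  have hcii : 0 < condCov V S i i := by
    rw [← Rm_single S hVs i]
    exact Rm_pos S _ hV hiS (by simp)
  set cii := condCov V S i i
  set cik := condCov V S i k
  set ckk := condCov V S k k
  set γ0 := cik / cii with hγ0
  have hle : condCov V (insert i S) k k ≤ ckk - cik ^ 2 / cii := by
    rw [← Rm_single (insert i S) hVs k]
    set β1 := Function.update (βopt V S ((Pi.single k 1 : Fin p → ℝ) - γ0 • (Pi.single i 1 : Fin p → ℝ))) i γ0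
      with hβ1
    have h1 : Rm V (insert i S) (Pi.single k 1) ≤ Qf V (insert i S) (Pi.single k 1) β1 :=
      Rm_le_Qf _ _ _ hV
    have h2 : Qf V (insert i S) (Pi.single k 1) β1
        = Qf V S ((Pi.single k 1 : Fin p → ℝ) - γ0 • (Pi.single i 1 : Fin p → ℝ)) β1 := by
      rw [Qf_insert S hVs hiS k β1]
      congr 2
      simp [hβ1]
    have h3 : Qf V S ((Pi.single k 1 : Fin p → ℝ) - γ0 • (Pi.single i 1 : Fin p → ℝ)) β1
        = Qf V S ((Pi.single k 1 : Fin p → ℝ) - γ0 • (Pi.single i 1 : Fin p → ℝ))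
          (βopt V S ((Pi.single k 1 : Fin p → ℝ) - γ0 • (Pi.single i 1 : Fin p → ℝ))) := by
      refine Qf_congr _ S _ _ fun j hj => ?_
      rw [hβ1, Function.update_of_ne (fun h => hiS (by simpa [← h] using hj))]
    have h4 := Qf_attains S ((Pi.single k 1 : Fin p → ℝ) - γ0 • (Pi.single i 1 : Fin p → ℝ)) hV
    have h5 := Rm_quad S hV γ0 i k
    have : Rm V (insert i S) (Pi.single k 1) ≤ ckk - 2 * γ0 * cik + γ0 ^ 2 * cii := by
      rw [← h5]
      calc Rm V (insert i S) (Pi.single k 1) ≤ _ := h1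
        _ = _ := h2
        _ = _ := h3
        _ = _ := h4
    refine le_trans this (le_of_eq ?_)
    rw [hγ0]
    field_simp
    ring
  have hge : ckk - cik ^ 2 / cii ≤ condCov V (insert i S) k k := by
    rw [← Rm_single (insert i S) hVs k]
    set βs := βopt V (insert i S) (Pi.single k 1) with hβs
    have h1 : Rm V (insert i S) (Pi.single k 1) = Qf V (insert i S) (Pi.single k 1) βs :=
      (Qf_attains _ _ hV).symm
    have h2 : Qf V (insert i S) (Pi.single k 1) βs
        = Qf V S ((Pi.single k 1 : Fin p → ℝ) - βs i • (Pi.single i 1 : Fin p → ℝ)) βs :=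
      Qf_insert S hVs hiS k βs
    have h3 : Rm V S ((Pi.single k 1 : Fin p → ℝ) - βs i • (Pi.single i 1 : Fin p → ℝ))
        ≤ Qf V S ((Pi.single k 1 : Fin p → ℝ) - βs i • (Pi.single i 1 : Fin p → ℝ)) βs :=
      Rm_le_Qf _ _ _ hV
    have h4 := Rm_quad S hV (βs i) i k
    have key : ckk - cik ^ 2 / cii ≤ ckk - 2 * βs i * cik + βs i ^ 2 * cii := by
      have hc : cik ^ 2 / cii * cii = cik ^ 2 := div_mul_cancel₀ _ hcii.ne'
      nlinarith [sq_nonneg (βs i * cii - cik), hcii]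
    rw [h1, h2]
    calc ckk - cik ^ 2 / cii ≤ ckk - 2 * βs i * cik + βs i ^ 2 * cii := key
      _ = Rm V S ((Pi.single k 1 : Fin p → ℝ) - βs i • (Pi.single i 1 : Fin p → ℝ)) := h4.symm
      _ ≤ _ := h3
  linarith

end OracleAux

open OracleAux Matrix in
lemma oracleNodeMaxLL_eq {p : ℕ} {V : Matrix (Fin p) (Fin p) ℝ} (hV : V.PosDef) (k : Fin p)
    (P : Finset (Fin p)) (hkP : k ∉ P) :
    oracleNodeMaxLL V k P
      = -(1 / 2) * Real.log (2 * Real.pi * condCov V P k k) - 1 / 2 := by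
  have hVs : Vᵀ = V := by simpa [Matrix.IsHermitian] using hV.isHermitian
  set q := condCov V P k k with hq0
  have hq : 0 < q := by
    rw [hq0, ← Rm_single P hVs k]
    exact Rm_pos P _ hV hkP (by simp)
  have hQ : ∀ β : Fin p → ℝ,
      V k k - 2 * ∑ j ∈ P, β j * V j k + ∑ j ∈ P, ∑ l ∈ P, β j * β l * V j l
        = Qf V P (Pi.single k 1) β := by
    intro β
    unfold Qf
    rw [mulVec_single' V k]
    have h0 : (Pi.single k 1 : Fin p → ℝ) ⬝ᵥ (fun j => V j k) = V k k := by
      simp [single_dotProduct]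
    rw [h0]
  have h2pi : (0:ℝ) < 2 * Real.pi := by positivity
  apply IsGreatest.csSup_eq
  constructor
  · refine ⟨βopt V P (Pi.single k 1), q, hq, ?_⟩
    rw [hQ, Qf_attains P _ hV, Rm_single P hVs k, ← hq0]
    have : q / (2 * q) = 1 / 2 := by
      rw [div_eq_iff (by positivity)]
      ring
    rw [this]
  · rintro v ⟨β, σ2, hσ, rfl⟩
    have h1 : q ≤ V k k - 2 * ∑ j ∈ P, β j * V j k + ∑ j ∈ P, ∑ l ∈ P, β j * β l * V j l := by
      rw [hQ β, hq0, ← Rm_single P hVs k]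
      exact Rm_le_Qf P _ β hV
    have h2σ : (0:ℝ) < 2 * σ2 := by positivity
    have h2 : q / (2 * σ2) ≤ (V k k - 2 * ∑ j ∈ P, β j * V j k
        + ∑ j ∈ P, ∑ l ∈ P, β j * β l * V j l) / (2 * σ2) :=
      (div_le_div_iff_of_pos_right h2σ).mpr h1
    have key := Real.add_one_le_exp (Real.log q - Real.log σ2)
    rw [Real.exp_sub, Real.exp_log hq, Real.exp_log hσ] at key
    have hl1 : Real.log (2 * Real.pi * q) = Real.log (2 * Real.pi) + Real.log q :=
      Real.log_mul h2pi.ne' hq.ne'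
    have hl2 : Real.log (2 * Real.pi * σ2) = Real.log (2 * Real.pi) + Real.log σ2 :=
      Real.log_mul h2pi.ne' hσ.ne'
    have he : q / (2 * σ2) = q / σ2 / 2 := by ring
    linarith [h2, key, he]

open OracleAux Matrix

/-- **Oracle score difference (Lemma 2).** For a multivariate Gaussian distribution with
positive definite covariance `V`, if `H'` is obtained from `H` by adding the edge `i → k`
(with `i ∈ Nd_H(k) \ Pa_H(k)`), then the oracle score difference is
`(1/2)·log(1 − ρ²_{ik|Pa_H(k)}) + λ`. -/
theorem oracle_score_difference {p : ℕ} (V : Matrix (Fin p) (Fin p) ℝ) (hV : V.PosDef)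
    (lam : ℝ) (H H' : FinDAG p) (i k : Fin p) (hik : i ≠ k)
    (hnd : ¬ H.desc k i) (hnp : i ∉ H.pa k)
    (hH' : ∀ a b, H'.E a b = true ↔ (H.E a b = true ∨ (a = i ∧ b = k))) :
    oracleScore lam V H' - oracleScore lam V H
      = (1 / 2) * Real.log (1 - parcor V (H.pa k) i k ^ 2) + lam := by
  classical
  set S := H.pa k with hS
  have hVs : Vᵀ = V := by simpa [Matrix.IsHermitian] using hV.isHermitian
  have hkk : k ∉ S := by
    simp only [hS, FinDAG.pa, Finset.mem_filter, Finset.mem_univ, true_and]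
    intro h
    exact H.acyclic k (Relation.TransGen.single h)
  have hiS : i ∉ S := hnp
  have hpa' : H'.pa k = insert i S := by
    ext j
    simp only [FinDAG.pa, Finset.mem_filter, Finset.mem_univ, true_and, Finset.mem_insert, hS,
      hH' j k]
    tauto
  have hpam : ∀ m, m ≠ k → H'.pa m = H.pa m := by
    intro m hm
    ext j
    simp only [FinDAG.pa, Finset.mem_filter, Finset.mem_univ, true_and, hH' j m]
    constructor
    · rintro (h | ⟨rfl, rfl⟩)
      · exact h
      · exact absurd rfl hm
    · exact Or.inl
  have hEik : ¬ (H.E i k = true) := by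
    simpa [hS, FinDAG.pa] using hnp
  have hcount : (H'.edgeCount : ℝ) = (H.edgeCount : ℝ) + 1 := by
    have hset : (univ.filter fun q : Fin p × Fin p => H'.E q.1 q.2)
        = insert (i, k) (univ.filter fun q : Fin p × Fin p => H.E q.1 q.2) := by
      ext q
      simp only [Finset.mem_filter, Finset.mem_univ, true_and, Finset.mem_insert, hH' q.1 q.2,
        Prod.ext_iff]
      tauto
    have hnotmem : (i, k) ∉ (univ.filter fun q : Fin p × Fin p => H.E q.1 q.2) := by
      simp [hEik]
    unfold FinDAG.edgeCount
    rw [hset, Finset.card_insert_of_notMem hnotmem]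
    push_cast
    ring
  have hcii : 0 < condCov V S i i := by
    rw [← Rm_single S hVs i]
    exact Rm_pos S _ hV hiS (by simp)
  have hckk : 0 < condCov V S k k := by
    rw [← Rm_single S hVs k]
    exact Rm_pos S _ hV hkk (by simp)
  have hkiS : k ∉ insert i S := by
    simp only [Finset.mem_insert]
    rintro (h | h)
    · exact hik h.symm
    · exact hkk h
  have hq' : 0 < condCov V (insert i S) k k := by
    rw [← Rm_single (insert i S) hVs k]
    exact Rm_pos (insert i S) _ hV hkiS (by simp)
  set q := condCov V S k k with hqdef
  set q' := condCov V (insert i S) k k with hq'def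
  have hupdate : q' = q - condCov V S i k ^ 2 / condCov V S i i :=
    condCov_insert S hV hiS hkk
  have hLLk : oracleNodeMaxLL V k S = -(1/2) * Real.log (2*Real.pi*q) - 1/2 :=
    oracleNodeMaxLL_eq hV k S hkk
  have hLLk' : oracleNodeMaxLL V k (H'.pa k) = -(1/2) * Real.log (2*Real.pi*q') - 1/2 := by
    rw [hpa']
    exact oracleNodeMaxLL_eq hV k _ hkiS
  have hsum : ∑ m, oracleNodeMaxLL V m (H'.pa m) - ∑ m, oracleNodeMaxLL V m (H.pa m)
      = oracleNodeMaxLL V k (H'.pa k) - oracleNodeMaxLL V k (H.pa k) := by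
    rw [← Finset.sum_sub_distrib]
    rw [Finset.sum_eq_single k]
    · intro m _ hm
      rw [hpam m hm]
      ring
    · intro h
      exact absurd (Finset.mem_univ k) h
  have hsq : parcor V S i k ^ 2 = condCov V S i k ^ 2 / (condCov V S i i * q) := by
    unfold parcor
    rw [div_pow, Real.sq_sqrt (by positivity)]
  have hratio : 1 - parcor V S i k ^ 2 = q' / q := by
    rw [hsq, hupdate]
    field_simp
  have hlog : Real.log (2*Real.pi*q') - Real.log (2*Real.pi*q)
      = Real.log (1 - parcor V S i k ^ 2) := by
    rw [hratio, Real.log_div hq'.ne' hckk.ne',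
      Real.log_mul (by positivity) hq'.ne', Real.log_mul (by positivity) hckk.ne']
    ring
  calc oracleScore lam V H' - oracleScore lam V H
      = -(∑ m, oracleNodeMaxLL V m (H'.pa m) - ∑ m, oracleNodeMaxLL V m (H.pa m))
        + lam * ((H'.edgeCount : ℝ) - (H.edgeCount : ℝ)) := by
        unfold oracleScore
        ring
    _ = -(oracleNodeMaxLL V k (H'.pa k) - oracleNodeMaxLL V k S) + lam * 1 := by
        rw [hsum, show ((H'.edgeCount : ℝ) - (H.edgeCount : ℝ)) = 1 from by rw [hcount]; ring]
    _ = (1 / 2) * Real.log (1 - parcor V S i k ^ 2) + lam := by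
        rw [hLLk, hLLk']
        linarith [hlog]
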